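/- Define numerical semigroups S_i recursively: S_1 = ⟨2,3⟩, and if S_i is minimally generated by {a_1,...,a_{i+1}}, then S_{i+1} = ⟨2a_1, a_1+a_2, 2a_2, ..., 2a_{i+1}⟩. Then for every i ≥ 1, S_{i+1} is the gluing of 2S_i and ⟨a_1+a_2⟩ with d = 2a_1 + 2a_2, Betti(S_{i+1}) = {2a_1+2a_2, 2(2a_2), ..., 2(2a_{i+1})}, and S_{i+1} is uniquely presented. -/

import Mathlib

/-!
Write `a₀ = 2^m` and `aₖ = 2^m + 2^(k-1)` for `1 ≤ k ≤ m`; this is `gens (m - 1)`. The trades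
`2aₖ = a₀ + aₖ₊₁` (`k < m`) and `2aₘ = 3a₀` lower the number of copies of `a₁, …, aₘ`. A
factorization using each of `a₁, …, aₘ` at most once is determined by its value `s`: its length
is `s / 2^m` and `s % 2^m` is the binary number it encodes. If `s` is not one of the `2aₖ`, any
factorization `w + 2eₖ` of `s` has `w ≠ 0`, so the trade `w + 2eₖ → w + (trade of 2eₖ)` is a step
of `R`; hence the whole fiber of `s` is `R`-connected to its normal form and `s` is not Betti.
The fiber of `2aₖ` is exactly `{2eₖ, trade of 2eₖ}`, two factorizations with disjoint supports.
The gluing conditions are arithmetic: `2 S_i` generates `2ℤ` and `gens i 0 + gens i 1` is odd.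
-/

open Finset

variable {M : Type*} [AddCommMonoid M] {r : ℕ}

/-- The factorization homomorphism associated to the generating tuple `A`. -/
def phi (A : Fin r → M) (u : Fin r → ℕ) : M := ∑ i, u i • A i

/-- One step of the relation `R`: two factorizations of `a` with nonzero dot product. -/
def step (A : Fin r → M) (a : M) (u v : Fin r → ℕ) : Prop :=
  phi A u = a ∧ phi A v = a ∧ (∑ i, u i * v i) ≠ 0

/-- The relation `R` on the fiber of `a`: connected by a chain of factorizations with
consecutive nonzero dot products. -/
def Rrel (A : Fin r → M) (a : M) : (Fin r → ℕ) → (Fin r → ℕ) → Prop :=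
  Relation.ReflTransGen (step A a)

/-- `a` is a Betti element: its fiber has more than one `R`-class. -/
def IsBetti (A : Fin r → M) (a : M) : Prop :=
  ∃ u v : Fin r → ℕ, phi A u = a ∧ phi A v = a ∧ ¬ Rrel A a u v

/-- `a` is Betti-minimal: a Betti element minimal with respect to `b ≺ a ↔ a - b ∈ S`. -/
def BettiMinimal (A : Fin r → M) (a : M) : Prop :=
  IsBetti A a ∧ ∀ b : M, IsBetti A b → (∃ c : M, a = b + c) → b = a

/-- `a` has a unique presentation: exactly two factorizations, with disjoint support. -/
def HasUniquePres (A : Fin r → M) (a : M) : Prop :=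
  ∃ u v : Fin r → ℕ, u ≠ v ∧ {w : Fin r → ℕ | phi A w = a} = {u, v} ∧
    (∑ i, u i * v i) = 0

/-- The monoid generated by `A` is uniquely presented: every Betti element has exactly two
factorizations, with disjoint support. -/
def UniquelyPresented (A : Fin r → M) : Prop :=
  ∀ a : M, IsBetti A a → HasUniquePres A a
/-- `gens i` is the tuple of minimal generators of the numerical semigroup `S_{i+1}` of the
recursive family: `S₁ = ⟨2,3⟩`, and if `S_i` is minimally generated by `a₁,…,a_{i+1}` then
`S_{i+1} = ⟨2a₁, a₁+a₂, 2a₂, …, 2a_{i+1}⟩`. -/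
def gens : (i : ℕ) → (Fin (i + 2) → ℕ)
  | 0 => ![2, 3]
  | (i + 1) =>
      Fin.cons (2 * gens i 0)
        (Fin.cons (gens i 0 + gens i 1) (fun j : Fin (i + 1) => 2 * gens i j.succ))

theorem phi_add (A : Fin r → M) (u v : Fin r → ℕ) : phi A (u + v) = phi A u + phi A v := by
  simp only [phi, Pi.add_apply, add_smul, sum_add_distrib]

theorem phi_zero (A : Fin r → M) : phi A 0 = 0 := by
  simp [phi]

theorem phi_single (A : Fin r → M) (j : Fin r) (c : ℕ) : phi A (Pi.single j c) = c • A j := by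
  simp [phi, Pi.single_apply]

theorem step_add_add {A : Fin r → M} {a : M} {w x y : Fin r → ℕ} (hw : w ≠ 0)
    (ha : phi A (w + x) = a) (hxy : phi A x = phi A y) : step A a (w + x) (w + y) := by
  refine ⟨ha, by rwa [phi_add, ← hxy, ← phi_add], fun hdot => ?_⟩
  obtain ⟨i, hi⟩ := Function.ne_iff.1 hw
  have := sum_eq_zero_iff.1 hdot i (mem_univ i)
  simp only [Pi.add_apply, Pi.zero_apply, mul_eq_zero] at this hi
  omega

instance (A : Fin r → M) (a : M) : Std.Symm (step A a) where
  symm _ _ h := ⟨h.2.1, h.1, by simpa only [mul_comm] using h.2.2⟩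

theorem HasUniquePres.isBetti {A : Fin r → M} {a : M} (h : HasUniquePres A a) : IsBetti A a := by
  obtain ⟨u, v, huv, hfib, hdot⟩ := h
  have hmem : ∀ w, phi A w = a ↔ w = u ∨ w = v := fun w => by
    simpa using Set.ext_iff.1 hfib w
  refine ⟨u, v, (hmem u).2 (Or.inl rfl), (hmem v).2 (Or.inr rfl), fun h => huv ?_⟩
  suffices ∀ x, Rrel A a u x → x = u from (this v h).symm
  intro x hx
  induction hx with
  | refl => rfl
  | tail _ hstep ih =>
    subst ih
    rcases (hmem _).1 hstep.2.1 with rfl | rfl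
    · rfl
    · exact absurd hdot hstep.2.2

theorem Rrel.symm {A : Fin r → M} {a : M} {u v : Fin r → ℕ} (h : Rrel A a u v) : Rrel A a v u :=
  Std.Symm.symm (r := Relation.ReflTransGen (step A a)) _ _ h

theorem sum_fin_succ_mul_two_pow {n : ℕ} (f : Fin (n + 1) → ℕ) :
    ∑ j, f j * 2 ^ (j : ℕ) = f 0 + 2 * ∑ j : Fin n, f j.succ * 2 ^ (j : ℕ) := by
  simp only [Fin.sum_univ_succ, Fin.val_zero, pow_zero, mul_one, Fin.val_succ, pow_succ,
    mul_sum]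
  congr 1
  exact sum_congr rfl fun _ _ => by ring

theorem sum_mul_two_pow_lt {n : ℕ} {f : Fin n → ℕ} (hf : ∀ j, f j ≤ 1) :
    ∑ j, f j * 2 ^ (j : ℕ) < 2 ^ n := by
  induction n with
  | zero => simp
  | succ n ih =>
    have := ih (f := fun j => f j.succ) fun j => hf j.succ
    rw [sum_fin_succ_mul_two_pow, pow_succ]
    have := hf 0
    omega

theorem eq_of_sum_mul_two_pow_eq {n : ℕ} {f g : Fin n → ℕ} (hf : ∀ j, f j ≤ 1)
    (hg : ∀ j, g j ≤ 1) (h : ∑ j, f j * 2 ^ (j : ℕ) = ∑ j, g j * 2 ^ (j : ℕ)) : f = g := by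
  induction n with
  | zero => exact funext finZeroElim
  | succ n ih =>
    rw [sum_fin_succ_mul_two_pow, sum_fin_succ_mul_two_pow] at h
    have h0 : f 0 = g 0 := by have := hf 0; have := hg 0; omega
    have htail := ih (fun j => hf j.succ) (fun j => hg j.succ) (by omega)
    exact funext (Fin.cases h0 (congrFun htail))

def offset : ℕ → ℕ
  | 0 => 0
  | j + 1 => 2 ^ j

def gen (m : ℕ) (k : Fin (m + 1)) : ℕ := 2 ^ m + offset k

@[simp] theorem gen_zero (m : ℕ) : gen m 0 = 2 ^ m := rfl

@[simp] theorem gen_one (m : ℕ) : gen (m + 1) 1 = 2 ^ (m + 1) + 1 := rfl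

@[simp] theorem gen_succ (m : ℕ) (j : Fin m) : gen m j.succ = 2 ^ m + 2 ^ (j : ℕ) := rfl

theorem phi_gen {m : ℕ} (u : Fin (m + 1) → ℕ) :
    phi (gen m) u = (∑ k, u k) * 2 ^ m + ∑ j : Fin m, u j.succ * 2 ^ (j : ℕ) := by
  simp only [phi, smul_eq_mul, Fin.sum_univ_succ (f := fun k => u k * gen m k), gen_zero,
    gen_succ, mul_add, sum_add_distrib, Fin.sum_univ_succ (f := u), add_mul, sum_mul]
  ring

theorem le_phi_gen {m : ℕ} {u : Fin (m + 1) → ℕ} (hu : u ≠ 0) : 2 ^ m ≤ phi (gen m) u := by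
  obtain ⟨k, hk⟩ := Function.ne_iff.1 hu
  have : u k ≤ ∑ k, u k := single_le_sum (fun _ _ => Nat.zero_le _) (mem_univ k)
  rw [phi_gen]
  have : 1 * 2 ^ m ≤ (∑ k, u k) * 2 ^ m := Nat.mul_le_mul_right _ (by simp at hk; omega)
  omega

def IsBinaryTail {m : ℕ} (c : Fin (m + 1) → ℕ) : Prop := ∀ j : Fin m, c j.succ ≤ 1

theorem IsBinaryTail.eq_of_phi_gen_eq {m : ℕ} {c c' : Fin (m + 1) → ℕ} (hc : IsBinaryTail c)
    (hc' : IsBinaryTail c') (h : phi (gen m) c = phi (gen m) c') : c = c' := by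
  have divMod : ∀ c : Fin (m + 1) → ℕ, IsBinaryTail c →
      phi (gen m) c / 2 ^ m = ∑ k, c k ∧
        phi (gen m) c % 2 ^ m = ∑ j : Fin m, c j.succ * 2 ^ (j : ℕ) := fun c hc =>
    (Nat.div_mod_unique (Nat.two_pow_pos m)).2 ⟨by rw [phi_gen]; ring, sum_mul_two_pow_lt hc⟩
  obtain ⟨hL, hE⟩ := divMod c hc
  obtain ⟨hL', hE'⟩ := divMod c' hc'
  have htail := eq_of_sum_mul_two_pow_eq hc hc' (by rw [← hE, ← hE', h])
  have h0 : c 0 = c' 0 := by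
    have := hL.symm.trans (h ▸ hL')
    rwa [Fin.sum_univ_succ, Fin.sum_univ_succ, sum_congr rfl fun j _ => congrFun htail j,
      Nat.add_right_cancel_iff] at this
  exact funext (Fin.cases h0 (congrFun htail))

theorem exists_eq_add_single_of_not_isBinaryTail {m : ℕ} {u : Fin (m + 1) → ℕ}
    (h : ¬ IsBinaryTail u) : ∃ (i : Fin m) (w : Fin (m + 1) → ℕ), u = w + Pi.single i.succ 2 := by
  obtain ⟨i, hi⟩ := not_forall.1 h
  refine ⟨i, u - Pi.single i.succ 2, (tsub_add_cancel_of_le fun k => ?_).symm⟩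
  rcases eq_or_ne k i.succ with rfl | hk
  · simp only [Pi.single_eq_same]; omega
  · simp [hk]

def trade (m : ℕ) (j : Fin m) : Fin (m + 1) → ℕ :=
  if h : (j : ℕ) + 1 < m then Pi.single 0 1 + Pi.single (Fin.succ ⟨j + 1, h⟩) 1
  else Pi.single 0 3

theorem phi_trade {m : ℕ} (j : Fin m) : phi (gen m) (trade m j) = 2 * gen m j.succ := by
  unfold trade
  split_ifs with h
  · simp only [phi_add, phi_single, gen_zero, gen_succ, smul_eq_mul]
    ring
  · have hm : 2 ^ m = 2 * 2 ^ (j : ℕ) := by rw [← pow_succ']; congr 1; omega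
    simp only [phi_single, gen_zero, gen_succ, smul_eq_mul, hm]
    ring

theorem trade_isBinaryTail {m : ℕ} (j : Fin m) : IsBinaryTail (trade m j) := by
  intro i
  unfold trade
  split_ifs <;> simp only [Pi.add_apply, Pi.single_apply, Fin.succ_ne_zero, if_false] <;> grind

theorem sum_succ_trade_lt {m : ℕ} (j : Fin m) : ∑ i : Fin m, trade m j i.succ < 2 := by
  unfold trade
  split_ifs <;>
    simp only [Pi.add_apply, Pi.single_apply, Fin.succ_inj, Fin.succ_ne_zero, if_false,
      zero_add, sum_ite_eq', mem_univ, if_true, sum_const_zero] <;> norm_num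

theorem trade_ne_single {m : ℕ} (j : Fin m) : trade m j ≠ Pi.single j.succ 2 := by
  intro h
  have := congrFun h 0
  unfold trade at this
  split_ifs at this <;> simp [Fin.succ_ne_zero] at this

theorem sum_single_mul_trade {m : ℕ} (j : Fin m) :
    ∑ i, (Pi.single j.succ 2 : Fin (m + 1) → ℕ) i * trade m j i = 0 := by
  simp only [Pi.single_apply, ite_mul, zero_mul, sum_ite_eq', mem_univ, if_true]
  unfold trade
  split_ifs <;> simp [Fin.ext_iff]

theorem phi_gen_eq_two_mul_iff {m : ℕ} (j : Fin m) (w : Fin (m + 1) → ℕ) :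
    phi (gen m) w = 2 * gen m j.succ ↔ w = Pi.single j.succ 2 ∨ w = trade m j := by
  refine ⟨fun hw => ?_, ?_⟩
  · by_cases hbin : IsBinaryTail w
    · exact Or.inr (hbin.eq_of_phi_gen_eq (trade_isBinaryTail j) (hw.trans (phi_trade j).symm))
    obtain ⟨i, w', rfl⟩ := exists_eq_add_single_of_not_isBinaryTail hbin
    rw [phi_add, phi_single, smul_eq_mul] at hw
    have hj : 2 ^ ((j : ℕ) + 1) ≤ 2 ^ m := Nat.pow_le_pow_right two_pos j.isLt
    obtain rfl : w' = 0 := by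
      by_contra hw'
      have := le_phi_gen hw'
      have := Nat.two_pow_pos i
      simp only [gen_succ, pow_succ] at hw hj
      omega
    have hij : 2 ^ (i : ℕ) = 2 ^ (j : ℕ) := by simp only [phi_zero, gen_succ] at hw; omega
    rw [Fin.ext (Nat.pow_right_injective le_rfl hij), zero_add]
    exact Or.inl rfl
  · rintro (rfl | rfl)
    · rw [phi_single, smul_eq_mul]
    · exact phi_trade j

theorem hasUniquePres_two_mul_gen {m : ℕ} (j : Fin m) :
    HasUniquePres (gen m) (2 * gen m j.succ) :=
  ⟨Pi.single j.succ 2, trade m j, (trade_ne_single j).symm,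
    Set.ext fun w => phi_gen_eq_two_mul_iff j w, sum_single_mul_trade j⟩

theorem exists_isBinaryTail_rrel {m s : ℕ} (hs : ∀ j : Fin m, s ≠ 2 * gen m j.succ)
    (u : Fin (m + 1) → ℕ) (hu : phi (gen m) u = s) :
    ∃ c, IsBinaryTail c ∧ phi (gen m) c = s ∧ Rrel (gen m) s u c := by
  induction hn : ∑ j : Fin m, u j.succ using Nat.strong_induction_on generalizing u with
  | _ n ih =>
  by_cases hbin : IsBinaryTail u
  · exact ⟨u, hbin, hu, Relation.ReflTransGen.refl⟩
  obtain ⟨i, w, rfl⟩ := exists_eq_add_single_of_not_isBinaryTail hbin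
  have hw : w ≠ 0 := by
    rintro rfl
    exact hs i (by rw [← hu, zero_add, phi_single, smul_eq_mul])
  have hstep : step (gen m) s (w + Pi.single i.succ 2) (w + trade m i) :=
    step_add_add hw hu (by rw [phi_single, phi_trade, smul_eq_mul])
  have hlt : ∑ j : Fin m, (w + trade m i) j.succ < n := by
    have := sum_succ_trade_lt i
    simp only [← hn, Pi.add_apply, sum_add_distrib, Pi.single_apply, Fin.succ_inj, sum_ite_eq',
      mem_univ, if_true]
    omega
  obtain ⟨c, hc, hcs, hrel⟩ := ih _ hlt _ hstep.2.1 rfl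
  exact ⟨c, hc, hcs, hrel.head hstep⟩

theorem isBetti_gen_iff {m s : ℕ} : IsBetti (gen m) s ↔ ∃ j : Fin m, s = 2 * gen m j.succ := by
  refine ⟨fun ⟨u, v, hu, hv, huv⟩ => ?_, fun ⟨j, hj⟩ => hj ▸ (hasUniquePres_two_mul_gen j).isBetti⟩
  by_contra! hs
  obtain ⟨c, hc, hcs, huc⟩ := exists_isBinaryTail_rrel hs u hu
  obtain ⟨c', hc', hcs', hvc'⟩ := exists_isBinaryTail_rrel hs v hv
  obtain rfl := hc.eq_of_phi_gen_eq hc' (hcs.trans hcs'.symm)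
  exact huv (huc.trans hvc'.symm)

theorem setOf_isBetti_gen {m : ℕ} :
    {s | IsBetti (gen m) s} = (fun k => 2 * gen m k) '' {k | k ≠ 0} := by
  ext s
  simp [isBetti_gen_iff, Fin.exists_fin_succ, Fin.succ_ne_zero, eq_comm]

theorem uniquelyPresented_gen (m : ℕ) : UniquelyPresented (gen m) := fun _ ha => by
  obtain ⟨j, rfl⟩ := isBetti_gen_iff.1 ha
  exact hasUniquePres_two_mul_gen j

theorem gens_eq_gen (i : ℕ) : gens i = gen (i + 1) := by
  induction i with
  | zero => funext k; fin_cases k <;> rfl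
  | succ i ih =>
    funext k
    refine Fin.cases ?_ (fun j => Fin.cases ?_ (fun l => ?_) j) k <;>
      simp only [gens, ih, Fin.cons_zero, Fin.cons_succ, gen_zero, gen_one, gen_succ, Fin.val_zero,
        Fin.val_succ, pow_succ] <;> ring

theorem closure_range_two_mul_gens (i : ℕ) :
    AddSubgroup.closure (Set.range fun k => ((2 * gens i k : ℕ) : ℤ)) =
      AddSubgroup.zmultiples 2 := by
  refine le_antisymm ((AddSubgroup.closure_le _).2 ?_) (AddSubgroup.zmultiples_le.2 ?_)
  · rintro _ ⟨k, rfl⟩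
    exact Int.mem_zmultiples_iff.2 ⟨gens i k, by push_cast; rfl⟩
  · have h2 : (2 : ℤ) = ((2 * gens i 1 : ℕ) : ℤ) - ((2 * gens i 0 : ℕ) : ℤ) := by
      rw [gens_eq_gen, gen_zero, gen_one]; push_cast; ring
    rw [h2]
    exact sub_mem (AddSubgroup.subset_closure ⟨1, rfl⟩) (AddSubgroup.subset_closure ⟨0, rfl⟩)

/-- For every `i ≥ 1`, `S_{i+1}` is the gluing of `2 S_i` and `⟨a₁ + a₂⟩` along
`d = 2a₁ + 2a₂`, its Betti elements are `{2a₁+2a₂, 2(2a₂), …, 2(2a_{i+1})}` (i.e. the doubles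
of all its minimal generators other than the first), and `S_{i+1}` is uniquely presented. -/
theorem stmt19 (i : ℕ) :
    -- d belongs to both pieces and is nonzero
    (2 * gens i 0 + 2 * gens i 1
        ∈ AddSubmonoid.closure (Set.range (fun k => 2 * gens i k))) ∧
    (2 * gens i 0 + 2 * gens i 1
        ∈ AddSubmonoid.closure ({gens i 0 + gens i 1} : Set ℕ)) ∧
    (2 * gens i 0 + 2 * gens i 1 ≠ 0) ∧
    -- gluing condition on the generated groups (inside ℤ)
    (AddSubgroup.closure (Set.range (fun k => ((2 * gens i k : ℕ) : ℤ))) ⊓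
        AddSubgroup.zmultiples ((gens i 0 + gens i 1 : ℕ) : ℤ)
      = AddSubgroup.zmultiples ((2 * gens i 0 + 2 * gens i 1 : ℕ) : ℤ)) ∧
    -- the Betti elements of S_{i+2} = ⟨gens (i+1)⟩
    ({s : ℕ | IsBetti (gens (i + 1)) s}
      = (fun k => 2 * gens (i + 1) k) '' {k : Fin (i + 3) | k ≠ 0}) ∧
    -- S_{i+2} is uniquely presented
    UniquelyPresented (gens (i + 1)) := by
  have hodd : Odd (gens i 0 + gens i 1) := by
    rw [gens_eq_gen, gen_zero, gen_one, ← add_assoc, ← two_mul]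
    exact odd_two_mul_add_one _
  refine ⟨add_mem (AddSubmonoid.subset_closure ⟨0, rfl⟩) (AddSubmonoid.subset_closure ⟨1, rfl⟩),
    AddSubmonoid.mem_closure_singleton.2 ⟨2, by rw [smul_eq_mul]; ring⟩,
    by have := hodd.pos; omega, ?_, ?_, ?_⟩
  · rw [closure_range_two_mul_gens, Int.zmultiples_inf, ← mul_add]
    congr 2
    exact (Nat.coprime_two_left.2 hodd).lcm_eq_mul
  · rw [gens_eq_gen]
    exact setOf_isBetti_gen
  · rw [gens_eq_gen]
    exact uniquelyPresented_gen _
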